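/- Let α > −1/2, let (a, b) be an open interval with a ∈ ℝ ∪ {−∞} and b ∈ ℝ ∪ {+∞}, and let u : (a, b) → ℝ be twice differentiable and satisfy u''(x) = 2u(x)³ + x·u(x) − α on (a, b). Suppose f(x) := 2u(x)² − 2u'(x) + x satisfies f(x) → +∞ as x → a⁺ and f(x) → +∞ as x → b⁻. Then f(x) ≠ 0 for all x ∈ (a, b). -/

import Mathlib

/-!
Differentiating `f = 2u² - 2u' + x` and substituting Painlevé II gives the Riccati-type identity
`f' = 2α + 1 - 2u f`, so `f' = 2α + 1 > 0` at every zero of `f`: zeros of `f` can only be crossed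
upwards. Since `f > 0` near the left endpoint, a first zero of `f` would have to be approached
from positive values, which a crossing with positive slope forbids.
-/

open Filter Topology Set

/-- The auxiliary function `f(x) = 2 u(x)^2 - 2 u'(x) + x` appearing in the
Bäcklund transformation for Painlevé II. -/
def piiF (u u' : ℝ → ℝ) : ℝ → ℝ := fun x => 2 * (u x) ^ 2 - 2 * u' x + x

/-- The open interval `(a, b) ⊆ ℝ` with extended-real endpoints
`a ∈ ℝ ∪ {-∞}`, `b ∈ ℝ ∪ {+∞}`. -/
def erealIoo (a b : EReal) : Set ℝ := {x : ℝ | a < (x : ℝ) ∧ ((x : ℝ) : EReal) < b}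

/-- The filter of real numbers tending to the extended real `a` from the
right (this is `𝓝[>] a` if `a` is real, and `atBot` if `a = -∞`). -/
noncomputable def fromRight (a : EReal) : Filter ℝ :=
  Filter.comap (fun x : ℝ => (x : EReal)) (𝓝[>] a)

/-- The filter of real numbers tending to the extended real `b` from the
left (this is `𝓝[<] b` if `b` is real, and `atTop` if `b = +∞`). -/
noncomputable def fromLeft (b : EReal) : Filter ℝ :=
  Filter.comap (fun x : ℝ => (x : EReal)) (𝓝[<] b)

theorem HasDerivAt.eventually_lt_of_deriv_pos {f : ℝ → ℝ} {f' x : ℝ} (hf : HasDerivAt f f' x)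
    (hf' : 0 < f') : ∀ᶠ y in 𝓝[<] x, f y < f x := by
  filter_upwards [(hasDerivAt_iff_tendsto_slope_left_right.mp hf).1.eventually
    (eventually_gt_nhds hf'), self_mem_nhdsWithin] with y hslope hy
  exact (slope_pos_iff_gt hy).mp hslope

theorem ContinuousOn.exists_first_zero {f : ℝ → ℝ} {a b : ℝ} (hf : ContinuousOn f (Icc a b))
    (hab : a ≤ b) (ha : 0 < f a) (hb : f b ≤ 0) :
    ∃ z ∈ Ioc a b, f z = 0 ∧ ∀ y ∈ Ico a z, 0 < f y := by
  have hZ : IsCompact (Icc a b ∩ f ⁻¹' {0}) := isCompact_Icc.of_isClosed_subset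
    (hf.preimage_isClosed_of_isClosed isClosed_Icc isClosed_singleton) inter_subset_left
  obtain ⟨z₀, hz₀, hfz₀⟩ := intermediate_value_Icc' hab hf ⟨hb, ha.le⟩
  obtain ⟨z, ⟨hz, hfz⟩, hleast⟩ := hZ.exists_isLeast ⟨z₀, hz₀, hfz₀⟩
  have hpos : ∀ y ∈ Ico a z, 0 < f y := by
    intro y hy
    by_contra! hfy
    have hyb : y ≤ b := hy.2.le.trans hz.2
    obtain ⟨w, hw, hfw⟩ :=
      intermediate_value_Icc' hy.1 (hf.mono (Icc_subset_Icc_right hyb)) ⟨hfy, ha.le⟩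
    exact (hleast ⟨⟨hw.1, hw.2.trans hyb⟩, hfw⟩).not_gt (hw.2.trans_lt hy.2)
  refine ⟨z, ⟨lt_of_le_of_ne hz.1 ?_, hz.2⟩, hfz, hpos⟩
  rintro rfl
  exact ha.ne' hfz

theorem ContinuousOn.pos_of_deriv_pos_of_eq_zero {f : ℝ → ℝ} {c d : ℝ}
    (hf : ContinuousOn f (Icc c d)) (hc : 0 < f c)
    (hder : ∀ x ∈ Ioc c d, f x = 0 → ∃ f', HasDerivAt f f' x ∧ 0 < f') :
    ∀ x ∈ Icc c d, 0 < f x := by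
  intro x hx
  by_contra! hfx
  obtain ⟨z, hz, hfz, hpos⟩ :=
    (hf.mono (Icc_subset_Icc_right hx.2)).exists_first_zero hx.1 hc hfx
  obtain ⟨f', hd, hf'⟩ := hder z ⟨hz.1, hz.2.trans hx.2⟩ hfz
  obtain ⟨y, hfy, hy⟩ := ((hd.eventually_lt_of_deriv_pos hf').and
    (Ico_mem_nhdsLT hz.1 : ∀ᶠ y in 𝓝[<] z, y ∈ Ico c z)).exists
  exact (hpos y hy).not_gt (hfz ▸ hfy)

theorem exists_between_of_eventually_fromRight {a : EReal} {p : ℝ → Prop}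
    (h : ∀ᶠ x in fromRight a, p x) {x₀ : ℝ} (hx₀ : a < x₀) : ∃ c : ℝ, a < c ∧ c < x₀ ∧ p c := by
  obtain ⟨V, hV, hVp⟩ := mem_comap.mp h
  obtain ⟨t, hat, htV⟩ := (mem_nhdsGT_iff_exists_Ioo_subset' hx₀).mp hV
  obtain ⟨c, hac, hct⟩ := EReal.exists_between_coe_real (lt_min hat hx₀)
  exact ⟨c, hac, EReal.coe_lt_coe_iff.mp (hct.trans_le (min_le_right _ _)),
    hVp (htV ⟨hac, hct.trans_le (min_le_left _ _)⟩)⟩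

theorem hasDerivAt_piiF {u u' u'' : ℝ → ℝ} {α x : ℝ} (hu : HasDerivAt u (u' x) x)
    (hu' : HasDerivAt u' (u'' x) x) (hPII : u'' x = 2 * u x ^ 3 + x * u x - α) :
    HasDerivAt (piiF u u') (2 * α + 1 - 2 * u x * piiF u u' x) x := by
  refine ((((hu.pow 2).const_mul 2).sub (hu'.const_mul 2)).add (hasDerivAt_id x)).congr_deriv ?_
  simp only [piiF, hPII]
  push_cast
  ring

theorem piiF_no_zero_between_general (α : ℝ) (hα : -1/2 < α) (a b : EReal)
    (u u' u'' : ℝ → ℝ)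
    (hu : ∀ x ∈ erealIoo a b, HasDerivAt u (u' x) x)
    (hu' : ∀ x ∈ erealIoo a b, HasDerivAt u' (u'' x) x)
    (hPII : ∀ x ∈ erealIoo a b, u'' x = 2 * (u x) ^ 3 + x * u x - α)
    (hfa : Tendsto (piiF u u') (fromRight a) atTop) :
    ∀ x ∈ erealIoo a b, piiF u u' x ≠ 0 := by
  intro x₀ hx₀ hfx₀
  obtain ⟨c, hac, hcx₀, hfc⟩ :=
    exists_between_of_eventually_fromRight (hfa.eventually_gt_atTop 0) hx₀.1
  have hIcc : Icc c x₀ ⊆ erealIoo a b := fun y hy =>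
    ⟨hac.trans_le (EReal.coe_le_coe_iff.mpr hy.1), (EReal.coe_le_coe_iff.mpr hy.2).trans_lt hx₀.2⟩
  have hderiv : ∀ y ∈ Icc c x₀,
      HasDerivAt (piiF u u') (2 * α + 1 - 2 * u y * piiF u u' y) y := fun y hy =>
    hasDerivAt_piiF (hu y (hIcc hy)) (hu' y (hIcc hy)) (hPII y (hIcc hy))
  have hpos : ∀ y ∈ Icc c x₀, 0 < piiF u u' y :=
    ContinuousOn.pos_of_deriv_pos_of_eq_zero
      (fun y hy => (hderiv y hy).continuousAt.continuousWithinAt) hfc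
      fun y hy hfy => ⟨_, hderiv y (Ioc_subset_Icc_self hy), by rw [hfy]; linarith⟩
  exact (hpos x₀ ⟨hcx₀.le, le_rfl⟩).ne' hfx₀

/-- let `α > -1/2` and let `u` solve Painlevé II with
parameter `α` on the open interval `(a, b)` (with `a ∈ ℝ ∪ {-∞}`,
`b ∈ ℝ ∪ {+∞}`).  If `f = 2 u^2 - 2 u' + x` tends to `+∞` at both endpoints
of `(a, b)`, then `f` has no zero in `(a, b)`. -/
theorem piiF_no_zero_between (α : ℝ) (hα : -1/2 < α) (a b : EReal)
    (hab : a < b) (u u' u'' : ℝ → ℝ)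
    (hu : ∀ x ∈ erealIoo a b, HasDerivAt u (u' x) x)
    (hu' : ∀ x ∈ erealIoo a b, HasDerivAt u' (u'' x) x)
    (hPII : ∀ x ∈ erealIoo a b, u'' x = 2 * (u x) ^ 3 + x * u x - α)
    (hfa : Tendsto (piiF u u') (fromRight a) atTop)
    (hfb : Tendsto (piiF u u') (fromLeft b) atTop) :
    ∀ x ∈ erealIoo a b, piiF u u' x ≠ 0 :=
  piiF_no_zero_between_general α hα a b u u' u'' hu hu' hPII hfa
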